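/- arXiv:2301.06195 — 3 statements merged into one kernel-verified Lean document; each statement's English description precedes it below -/
import Mathlib

section
/- Let g₁, …, gₙ ∈ ℝ, let ḡ = (1/n)Σᵢ gᵢ and s = √((1/n)Σᵢ (gᵢ − ḡ)²), and let ρ ≥ 0. Suppose that √ρ · (ḡ − gᵢ) ≤ s for every i ∈ {1,…,n}. Then the supremum of Σᵢ pᵢ gᵢ over all probability vectors p ∈ Δₙ satisfying (1/n)Σᵢ (n pᵢ − 1)² ≤ ρ is attained and equals ḡ + √ρ · s. -/
/-!
Write `qᵢ = n pᵢ - 1` for the deviation of the likelihood ratio of `p` from `1`. For a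
probability vector the objective is `ḡ + 𝔼 q (g - ḡ)` and the constraint reads `𝔼 q² ≤ ρ`,
so Cauchy–Schwarz bounds the objective by `ḡ + √ρ s`. Equality holds for `q = (√ρ / s) (g - ḡ)`,
and the hypothesis on `g` says exactly that `q ≥ -1`, i.e. that the corresponding `p` is
nonnegative.
-/

open scoped BigOperators

open Finset Fintype

namespace RobustAverage

variable {ι : Type*} [Fintype ι]

lemma expect_mul_le_sqrt_mul_sqrt (f g : ι → ℝ) :
    𝔼 i, f i * g i ≤ √(𝔼 i, f i ^ 2) * √(𝔼 i, g i ^ 2) :=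
  (Real.le_sqrt_of_sq_le (expect_mul_sq_le_sq_mul_sq _ f g)).trans_eq <|
    Real.sqrt_mul (expect_nonneg fun _ _ ↦ sq_nonneg _) _

lemma sum_mul_eq_expect_add_expect_mul_balance (p g : ι → ℝ) (hp : ∑ i, p i = 1) :
    ∑ i, p i * g i = 𝔼 i, g i + 𝔼 i, (card ι * p i - 1) * balance g i := by
  have : Nonempty ι := by
    by_contra!
    simp at hp
  have hcentered : ∑ i, p i * balance g i = ∑ i, p i * g i - 𝔼 i, g i := by
    simp only [balance_apply, mul_sub, sum_sub_distrib, ← sum_mul, hp, one_mul]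
  rw [Fintype.expect_eq_sum_div_card (fun i ↦ (card ι * p i - 1) * balance g i)]
  simp only [sub_mul, sum_sub_distrib, one_mul, sum_balance, mul_assoc, ← mul_sum, hcentered]
  field_simp
  ring

lemma sum_mul_le_of_expect_sq_le (p g : ι → ℝ) {ρ : ℝ} (hp : ∑ i, p i = 1)
    (hdiv : 𝔼 i, (card ι * p i - 1) ^ 2 ≤ ρ) :
    ∑ i, p i * g i ≤ 𝔼 i, g i + √ρ * √(𝔼 i, balance g i ^ 2) := by
  rw [sum_mul_eq_expect_add_expect_mul_balance p g hp]
  gcongr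
  exact (expect_mul_le_sqrt_mul_sqrt _ _).trans (by gcongr)

lemma exists_sum_mul_eq [Nonempty ι] (g : ι → ℝ) {ρ : ℝ} (hρ : 0 ≤ ρ)
    (hcond : ∀ i, √ρ * (𝔼 j, g j - g i) ≤ √(𝔼 j, balance g j ^ 2)) :
    ∃ p : ι → ℝ, (∀ i, 0 ≤ p i) ∧ ∑ i, p i = 1 ∧ 𝔼 i, (card ι * p i - 1) ^ 2 ≤ ρ ∧
      𝔼 i, g i + √ρ * √(𝔼 i, balance g i ^ 2) = ∑ i, p i * g i := by
  set σ := √(𝔼 i, balance g i ^ 2)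
  have hσ_sq : σ ^ 2 = 𝔼 i, balance g i ^ 2 :=
    Real.sq_sqrt (expect_nonneg fun _ _ ↦ sq_nonneg _)
  -- In the degenerate case `σ = 0`, Lean's `√ρ / 0 = 0` makes `q = 0`, the uniform distribution.
  set q : ι → ℝ := fun i ↦ √ρ / σ * balance g i
  have hq_ge : ∀ i, -1 ≤ q i := by
    intro i
    obtain hσ | hσ : σ = 0 ∨ 0 < σ := (Real.sqrt_nonneg _).eq_or_lt'
    · simp [q, hσ]
    · simp only [q, div_mul_eq_mul_div, le_div_iff₀ hσ, balance_apply]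
      linarith [hcond i]
  have hq_mean : 𝔼 i, q i = 0 := by
    simp only [q, ← mul_expect, expect_balance, mul_zero]
  have hq_sq : 𝔼 i, q i ^ 2 ≤ ρ := calc
    𝔼 i, q i ^ 2 = ρ / σ ^ 2 * σ ^ 2 := by
      simp only [q, mul_pow, ← mul_expect]
      rw [← hσ_sq, div_pow, Real.sq_sqrt hρ]
    _ ≤ ρ := by rcases eq_or_ne σ 0 with hσ | hσ <;> simp [hσ, hρ]
  have hq_mul : 𝔼 i, q i * balance g i = √ρ * σ := calc
    𝔼 i, q i * balance g i = √ρ / σ * σ ^ 2 := by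
      simp only [q, mul_assoc, ← mul_expect, ← sq]
      rw [← hσ_sq]
    _ = √ρ * σ := by rcases eq_or_ne σ 0 with hσ | hσ <;> field_simp [hσ]
  have hcard : (card ι : ℝ) ≠ 0 := by positivity
  have hp : ∀ i, card ι * ((1 + q i) / card ι) - 1 = q i := fun i ↦ by field_simp; ring
  have hsum : ∑ i, (1 + q i) / card ι = 1 := by
    rw [← sum_div, ← Fintype.expect_eq_sum_div_card, expect_add_distrib, Fintype.expect_const,
      hq_mean, add_zero]
  refine ⟨fun i ↦ (1 + q i) / card ι, fun i ↦ div_nonneg (by linarith [hq_ge i]) (by positivity),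
    hsum, by simpa only [hp] using hq_sq, ?_⟩
  rw [sum_mul_eq_expect_add_expect_mul_balance _ g hsum]
  simp only [hp, hq_mul]

theorem isGreatest_expect_add_sqrt_mul [Nonempty ι] (g : ι → ℝ) {ρ : ℝ} (hρ : 0 ≤ ρ)
    (hcond : ∀ i, √ρ * (𝔼 j, g j - g i) ≤ √(𝔼 j, balance g j ^ 2)) :
    IsGreatest {x : ℝ | ∃ p : ι → ℝ, (∀ i, 0 ≤ p i) ∧ ∑ i, p i = 1 ∧
        𝔼 i, (card ι * p i - 1) ^ 2 ≤ ρ ∧ x = ∑ i, p i * g i}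
      (𝔼 i, g i + √ρ * √(𝔼 i, balance g i ^ 2)) :=
  ⟨exists_sum_mul_eq g hρ hcond, by
    rintro _ ⟨p, -, hp, hdiv, rfl⟩
    exact sum_mul_le_of_expect_sq_le p g hp hdiv⟩

end RobustAverage

/-- **Exact finite-sample closed form of the χ²-distributionally robust average.**
Let `g₁, …, gₙ ∈ ℝ`, `ḡ = (1/n)Σᵢ gᵢ`, `s = √((1/n)Σᵢ (gᵢ − ḡ)²)`, and `ρ ≥ 0`.
If `√ρ · (ḡ − gᵢ) ≤ s` for every `i`, then the supremum of `Σᵢ pᵢ gᵢ` over all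
probability vectors `p` in the simplex with `(1/n)Σᵢ (n pᵢ − 1)² ≤ ρ` is attained
and equals `ḡ + √ρ · s`. -/
theorem robust_average_closed_form (n : ℕ) (hn : 0 < n) (g : Fin n → ℝ)
    (ρ : ℝ) (hρ : 0 ≤ ρ) (gbar s : ℝ)
    (hgbar : gbar = (1 / (n : ℝ)) * ∑ i, g i)
    (hs : s = Real.sqrt ((1 / (n : ℝ)) * ∑ i, (g i - gbar) ^ 2))
    (hcond : ∀ i, Real.sqrt ρ * (gbar - g i) ≤ s) :
    IsGreatest
      {x : ℝ | ∃ p : Fin n → ℝ, (∀ i, 0 ≤ p i) ∧ (∑ i, p i) = 1 ∧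
        (1 / (n : ℝ)) * ∑ i, ((n : ℝ) * p i - 1) ^ 2 ≤ ρ ∧ x = ∑ i, p i * g i}
      (gbar + Real.sqrt ρ * s) := by
  have : Nonempty (Fin n) := ⟨⟨0, hn⟩⟩
  have hmean (f : Fin n → ℝ) : 1 / (n : ℝ) * ∑ i, f i = 𝔼 i, f i := by
    rw [Fintype.expect_eq_sum_div_card, Fintype.card_fin, one_div_mul_eq_div]
  rw [hmean] at hgbar
  subst hgbar
  simp only [hmean, ← Fintype.balance_apply] at hs ⊢
  subst hs
  simpa only [Fintype.card_fin] using RobustAverage.isGreatest_expect_add_sqrt_mul g hρ hcond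
end

section
/- Let g₁, …, gₙ ∈ ℝ, let ḡ = (1/n)Σᵢ gᵢ and s = √((1/n)Σᵢ (gᵢ − ḡ)²), and suppose s > 0 and ρ > 0. Then the infimum over μ > 0 and ν ∈ ℝ of the dual objective (1/n)Σᵢ μ φ*((gᵢ − ν)/μ) + μρ + ν, where φ*(u) = u²/4 + u, is attained at ν = ḡ and μ = s/(2√ρ), and equals ḡ + √ρ · s. -/
open scoped BigOperators

/-- **Closed form of the Lagrangian dual of the χ² robust constraint.**
Let `g₁, …, gₙ ∈ ℝ`, `ḡ = (1/n)Σᵢ gᵢ`, `s = √((1/n)Σᵢ (gᵢ − ḡ)²)` with `s > 0`, and `ρ > 0`.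
The dual objective `(1/n)Σᵢ μ φ*((gᵢ − ν)/μ) + μρ + ν` with `φ*(u) = u²/4 + u`, minimized over
`μ > 0` and `ν ∈ ℝ`, attains its infimum at `ν = ḡ`, `μ = s/(2√ρ)`, with value `ḡ + √ρ · s`. -/
theorem dual_objective_closed_form (n : ℕ) (hn : 0 < n) (g : Fin n → ℝ)
    (ρ : ℝ) (hρ : 0 < ρ) (gbar s : ℝ)
    (hgbar : gbar = (1 / (n : ℝ)) * ∑ i, g i)
    (hs : s = Real.sqrt ((1 / (n : ℝ)) * ∑ i, (g i - gbar) ^ 2))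
    (hspos : 0 < s) :
    ((1 / (n : ℝ)) * ∑ i, (s / (2 * Real.sqrt ρ)) *
        (((g i - gbar) / (s / (2 * Real.sqrt ρ))) ^ 2 / 4 +
          (g i - gbar) / (s / (2 * Real.sqrt ρ))) +
      (s / (2 * Real.sqrt ρ)) * ρ + gbar = gbar + Real.sqrt ρ * s) ∧
    ∀ μ : ℝ, 0 < μ → ∀ ν : ℝ,
      gbar + Real.sqrt ρ * s ≤
        (1 / (n : ℝ)) * ∑ i, μ * (((g i - ν) / μ) ^ 2 / 4 + (g i - ν) / μ) + μ * ρ + ν := by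
  have hn' : (0:ℝ) < (n:ℝ) := by exact_mod_cast hn
  have hn0 : (n:ℝ) ≠ 0 := ne_of_gt hn'
  set r := Real.sqrt ρ with hr
  have hrpos : 0 < r := Real.sqrt_pos.mpr hρ
  have hr2 : r ^ 2 = ρ := Real.sq_sqrt hρ.le
  have hsumg : ∑ i, g i = (n:ℝ) * gbar := by
    rw [hgbar]; field_simp
  have hsum0 : ∑ i, (g i - gbar) = 0 := by
    rw [Finset.sum_sub_distrib, hsumg, Finset.sum_const, Finset.card_univ,
      Fintype.card_fin, nsmul_eq_mul]
    ring
  have hsq_nonneg : 0 ≤ (1 / (n:ℝ)) * ∑ i, (g i - gbar) ^ 2 := by positivity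
  have hs2 : s ^ 2 = (1 / (n:ℝ)) * ∑ i, (g i - gbar) ^ 2 := by
    rw [hs, Real.sq_sqrt hsq_nonneg]
  have hsumsq : ∑ i, (g i - gbar) ^ 2 = (n:ℝ) * s ^ 2 := by
    rw [hs2]; field_simp
  constructor
  · -- value at the optimizer
    set μ0 := s / (2 * r) with hμ0def
    have hμ0 : 0 < μ0 := by positivity
    have hμ0ne : μ0 ≠ 0 := ne_of_gt hμ0
    have hterm : ∀ x : ℝ, μ0 * ((x / μ0) ^ 2 / 4 + x / μ0) = x ^ 2 / (4 * μ0) + x := by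
      intro x; field_simp
    have hsum : ∑ i, μ0 * (((g i - gbar) / μ0) ^ 2 / 4 + (g i - gbar) / μ0)
        = (n:ℝ) * s ^ 2 / (4 * μ0) := by
      calc ∑ i, μ0 * (((g i - gbar) / μ0) ^ 2 / 4 + (g i - gbar) / μ0)
          = ∑ i, ((g i - gbar) ^ 2 / (4 * μ0) + (g i - gbar)) := by
            exact Finset.sum_congr rfl fun i _ => hterm _
        _ = (∑ i, (g i - gbar) ^ 2) / (4 * μ0) + ∑ i, (g i - gbar) := by
            rw [Finset.sum_add_distrib, Finset.sum_div]
        _ = (n:ℝ) * s ^ 2 / (4 * μ0) := by rw [hsumsq, hsum0]; ring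
    rw [hsum, hμ0def]
    have hrne : r ≠ 0 := ne_of_gt hrpos
    have hsne : s ≠ 0 := ne_of_gt hspos
    rw [← hr2]
    field_simp
    ring
  · intro μ hμ ν
    have hμne : μ ≠ 0 := ne_of_gt hμ
    have hterm : ∀ x : ℝ, μ * ((x / μ) ^ 2 / 4 + x / μ) = x ^ 2 / (4 * μ) + x := by
      intro x; field_simp
    have hsumν : ∑ i, (g i - ν) = (n:ℝ) * (gbar - ν) := by
      rw [Finset.sum_sub_distrib, hsumg, Finset.sum_const, Finset.card_univ,
        Fintype.card_fin, nsmul_eq_mul]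
      ring
    have hsumsqν : ∑ i, (g i - ν) ^ 2 = (n:ℝ) * s ^ 2 + (n:ℝ) * (gbar - ν) ^ 2 := by
      have : ∀ i : Fin n, (g i - ν) ^ 2
          = (g i - gbar) ^ 2 + 2 * (gbar - ν) * (g i - gbar) + (gbar - ν) ^ 2 := by
        intro i; ring
      rw [Finset.sum_congr rfl fun i _ => this i]
      rw [Finset.sum_add_distrib, Finset.sum_add_distrib, ← Finset.mul_sum, hsumsq, hsum0,
        Finset.sum_const, Finset.card_univ, Fintype.card_fin, nsmul_eq_mul]
      ring
    have hsum : ∑ i, μ * (((g i - ν) / μ) ^ 2 / 4 + (g i - ν) / μ)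
        = ((n:ℝ) * s ^ 2 + (n:ℝ) * (gbar - ν) ^ 2) / (4 * μ) + (n:ℝ) * (gbar - ν) := by
      calc ∑ i, μ * (((g i - ν) / μ) ^ 2 / 4 + (g i - ν) / μ)
          = ∑ i, ((g i - ν) ^ 2 / (4 * μ) + (g i - ν)) := by
            exact Finset.sum_congr rfl fun i _ => hterm _
        _ = (∑ i, (g i - ν) ^ 2) / (4 * μ) + ∑ i, (g i - ν) := by
            rw [Finset.sum_add_distrib, Finset.sum_div]
        _ = _ := by rw [hsumsqν, hsumν]
    rw [hsum]
    have h1 : (1 / (n:ℝ)) * (((n:ℝ) * s ^ 2 + (n:ℝ) * (gbar - ν) ^ 2) / (4 * μ)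
        + (n:ℝ) * (gbar - ν))
        = (s ^ 2 + (gbar - ν) ^ 2) / (4 * μ) + (gbar - ν) := by
      field_simp
    rw [h1]
    have key : (s ^ 2 + (gbar - ν) ^ 2) / (4 * μ) + μ * ρ - r * s
        = ((s - 2 * μ * r) ^ 2 + (gbar - ν) ^ 2) / (4 * μ) := by
      rw [← hr2]; field_simp; ring
    have hpos : 0 ≤ ((s - 2 * μ * r) ^ 2 + (gbar - ν) ^ 2) / (4 * μ) := by positivity
    linarith
end

section
/- (Strong duality for the χ² robust constraint.) Let g₁, …, gₙ ∈ ℝ, ḡ = (1/n)Σᵢ gᵢ, s = √((1/n)Σᵢ (gᵢ − ḡ)²), and suppose ρ > 0, s > 0, and √ρ · (ḡ − gᵢ) ≤ s for every i. Then sup{Σᵢ pᵢ gᵢ : p ∈ Δₙ, (1/n)Σᵢ (n pᵢ − 1)² ≤ ρ} = inf{(1/n)Σᵢ μ φ*((gᵢ − ν)/μ) + μρ + ν : μ > 0, ν ∈ ℝ}, where φ*(u) = u²/4 + u, and the common value is ḡ + √ρ · s. -/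
/-! Writing `pᵢ = (1 + aᵢ)/n`, the constraint says `Σ aᵢ = 0` and `(1/n)Σ aᵢ² ≤ ρ`, and
`Σ pᵢ gᵢ = ḡ + (1/n)Σ aᵢ (gᵢ − ḡ)`, so Cauchy–Schwarz bounds the primal value by `ḡ + √ρ · s`.
The bound is attained at `aᵢ = √ρ (gᵢ − ḡ)/s`, which is a probability vector exactly when
`√ρ (ḡ − gᵢ) ≤ s`. On the dual side the objective collapses to
`(s² + (ḡ − ν)²)/(4μ) + μρ + ḡ`, and AM–GM `√ρ · s ≤ s²/(4μ) + μρ` shows that its infimum is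
`ḡ + √ρ · s`, attained at `ν = ḡ`, `μ = s/(2√ρ)`. -/

open Fintype

section
variable {ι : Type*} [Fintype ι] {g : ι → ℝ} {gbar : ℝ}

theorem sum_sub_mean_eq_zero [Nonempty ι] (hgbar : gbar = 1 / (card ι : ℝ) * ∑ i, g i) :
    ∑ i, (g i - gbar) = 0 := by
  have : (card ι : ℝ) ≠ 0 := by positivity
  rw [Finset.sum_sub_distrib, Finset.sum_const, Finset.card_univ, nsmul_eq_mul, hgbar]
  field_simp
  ring

theorem sum_sq_sub_eq_sum_sq_sub_mean_add [Nonempty ι]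
    (hgbar : gbar = 1 / (card ι : ℝ) * ∑ i, g i) (c : ℝ) :
    ∑ i, (g i - c) ^ 2 = ∑ i, (g i - gbar) ^ 2 + card ι * (gbar - c) ^ 2 := by
  have h : ∀ i, (g i - c) ^ 2 = (g i - gbar) ^ 2 + 2 * (gbar - c) * (g i - gbar) + (gbar - c) ^ 2 :=
    fun i ↦ by ring
  simp_rw [h, Finset.sum_add_distrib, ← Finset.mul_sum, sum_sub_mean_eq_zero hgbar,
    Finset.sum_const, Finset.card_univ, nsmul_eq_mul, mul_zero, add_zero]

theorem sum_mul_sub_mean_eq [Nonempty ι] (hgbar : gbar = 1 / (card ι : ℝ) * ∑ i, g i)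
    {p : ι → ℝ} (hp : ∑ i, p i = 1) :
    ∑ i, p i * g i - gbar = 1 / (card ι : ℝ) * ∑ i, (card ι * p i - 1) * (g i - gbar) := by
  have : (card ι : ℝ) ≠ 0 := by positivity
  have h : ∀ i, (card ι * p i - 1) * (g i - gbar)
      = card ι * (p i * g i - gbar * p i) - (g i - gbar) := fun i ↦ by ring
  rw [Finset.sum_congr rfl fun i _ ↦ h i, Finset.sum_sub_distrib, sum_sub_mean_eq_zero hgbar,
    ← Finset.mul_sum, Finset.sum_sub_distrib, ← Finset.mul_sum, hp]
  field_simp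
  ring

theorem sum_mul_le_mean_add_sqrt_mul_sqrt [Nonempty ι]
    (hgbar : gbar = 1 / (card ι : ℝ) * ∑ i, g i) {p : ι → ℝ} (hp : ∑ i, p i = 1) {ρ : ℝ}
    (hpρ : 1 / (card ι : ℝ) * ∑ i, (card ι * p i - 1) ^ 2 ≤ ρ) :
    ∑ i, p i * g i ≤ gbar + √ρ * √(1 / (card ι : ℝ) * ∑ i, (g i - gbar) ^ 2) := by
  have hN : (0 : ℝ) ≤ 1 / card ι := by positivity
  calc ∑ i, p i * g i
      = gbar + 1 / (card ι : ℝ) * ∑ i, (card ι * p i - 1) * (g i - gbar) := by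
        rw [← sum_mul_sub_mean_eq hgbar hp]; ring
    _ ≤ gbar + 1 / (card ι : ℝ) *
          (√(∑ i, (card ι * p i - 1) ^ 2) * √(∑ i, (g i - gbar) ^ 2)) := by
        gcongr; exact Real.sum_mul_le_sqrt_mul_sqrt _ _ _
    _ = gbar + √(1 / (card ι : ℝ) * ∑ i, (card ι * p i - 1) ^ 2) *
          √(1 / (card ι : ℝ) * ∑ i, (g i - gbar) ^ 2) := by
        rw [Real.sqrt_mul hN, Real.sqrt_mul hN, mul_mul_mul_comm, Real.mul_self_sqrt hN]
    _ ≤ gbar + √ρ * √(1 / (card ι : ℝ) * ∑ i, (g i - gbar) ^ 2) := by gcongr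

variable (g) in
noncomputable def chiSqWorstCase (gbar r s : ℝ) (i : ι) : ℝ := (1 + r * (g i - gbar) / s) / card ι

theorem card_mul_chiSqWorstCase_sub_one [Nonempty ι] (r s : ℝ) (i : ι) :
    card ι * chiSqWorstCase g gbar r s i - 1 = r * (g i - gbar) / s := by
  have : (card ι : ℝ) ≠ 0 := by positivity
  rw [chiSqWorstCase, mul_div_cancel₀ _ this, add_sub_cancel_left]

theorem chiSqWorstCase_nonneg {r s : ℝ} (hs : 0 < s) {i : ι} (hi : r * (gbar - g i) ≤ s) :
    0 ≤ chiSqWorstCase g gbar r s i := by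
  have : 0 ≤ 1 + r * (g i - gbar) / s := by
    rw [← div_self hs.ne', ← add_div]; apply div_nonneg <;> linarith
  unfold chiSqWorstCase; positivity

theorem sum_chiSqWorstCase [Nonempty ι] (hgbar : gbar = 1 / (card ι : ℝ) * ∑ i, g i) (r s : ℝ) :
    ∑ i, chiSqWorstCase g gbar r s i = 1 := by
  have : (card ι : ℝ) ≠ 0 := by positivity
  simp_rw [chiSqWorstCase, ← Finset.sum_div, Finset.sum_add_distrib, mul_div_assoc,
    ← Finset.mul_sum, ← Finset.sum_div, sum_sub_mean_eq_zero hgbar]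
  simp [this]

theorem mean_sq_card_mul_chiSqWorstCase_sub_one [Nonempty ι] {r s : ℝ}
    (hs : s ^ 2 = 1 / (card ι : ℝ) * ∑ i, (g i - gbar) ^ 2) (hs0 : s ≠ 0) :
    1 / (card ι : ℝ) * ∑ i, (card ι * chiSqWorstCase g gbar r s i - 1) ^ 2 = r ^ 2 := by
  have h : ∀ i, (r * (g i - gbar) / s) ^ 2 = r ^ 2 / s ^ 2 * (g i - gbar) ^ 2 := fun i ↦ by ring
  simp_rw [card_mul_chiSqWorstCase_sub_one, h, ← Finset.mul_sum, mul_left_comm _ (r ^ 2 / s ^ 2),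
    ← hs]
  field_simp

theorem sum_chiSqWorstCase_mul [Nonempty ι] (hgbar : gbar = 1 / (card ι : ℝ) * ∑ i, g i) {r s : ℝ}
    (hs : s ^ 2 = 1 / (card ι : ℝ) * ∑ i, (g i - gbar) ^ 2) (hs0 : s ≠ 0) :
    ∑ i, chiSqWorstCase g gbar r s i * g i = gbar + r * s := by
  rw [← sub_eq_iff_eq_add', sum_mul_sub_mean_eq hgbar (sum_chiSqWorstCase hgbar r s)]
  have h : ∀ i, r * (g i - gbar) / s * (g i - gbar) = r / s * (g i - gbar) ^ 2 := fun i ↦ by ring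
  simp_rw [card_mul_chiSqWorstCase_sub_one, h, ← Finset.mul_sum, mul_left_comm _ (r / s), ← hs]
  field_simp

theorem chiSqDual_objective_eq [Nonempty ι] (hgbar : gbar = 1 / (card ι : ℝ) * ∑ i, g i) {μ : ℝ}
    (hμ : μ ≠ 0) (ν ρ : ℝ) :
    1 / (card ι : ℝ) * ∑ i, μ * (((g i - ν) / μ) ^ 2 / 4 + (g i - ν) / μ) + μ * ρ + ν
      = (1 / (card ι : ℝ) * ∑ i, (g i - gbar) ^ 2 + (gbar - ν) ^ 2) / (4 * μ) + μ * ρ + gbar := by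
  have : (card ι : ℝ) ≠ 0 := by positivity
  have h : ∀ i, μ * (((g i - ν) / μ) ^ 2 / 4 + (g i - ν) / μ)
      = (g i - ν) ^ 2 / (4 * μ) + ((g i - gbar) + (gbar - ν)) := fun i ↦ by field_simp; ring
  simp_rw [h, Finset.sum_add_distrib, ← Finset.sum_div, sum_sq_sub_eq_sum_sq_sub_mean_add hgbar ν,
    sum_sub_mean_eq_zero hgbar, Finset.sum_const, Finset.card_univ, nsmul_eq_mul]
  field_simp
  ring

theorem mul_le_sq_div_add_mul_sq {μ : ℝ} (hμ : 0 < μ) (r s : ℝ) :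
    r * s ≤ s ^ 2 / (4 * μ) + μ * r ^ 2 := by
  rw [div_add' _ _ _ (by positivity), le_div_iff₀ (by positivity)]
  nlinarith [sq_nonneg (s - 2 * μ * r)]

theorem isGreatest_chiSq_primal [Nonempty ι] (hgbar : gbar = 1 / (card ι : ℝ) * ∑ i, g i) {ρ s : ℝ}
    (hρ : 0 ≤ ρ) (hs : s = √(1 / (card ι : ℝ) * ∑ i, (g i - gbar) ^ 2)) (hspos : 0 < s)
    (hcond : ∀ i, √ρ * (gbar - g i) ≤ s) :
    IsGreatest {x : ℝ | ∃ p : ι → ℝ, (∀ i, 0 ≤ p i) ∧ (∑ i, p i) = 1 ∧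
        1 / (card ι : ℝ) * ∑ i, ((card ι : ℝ) * p i - 1) ^ 2 ≤ ρ ∧ x = ∑ i, p i * g i}
      (gbar + √ρ * s) := by
  have hs2 : s ^ 2 = 1 / (card ι : ℝ) * ∑ i, (g i - gbar) ^ 2 := by
    rw [hs, Real.sq_sqrt (by positivity)]
  refine ⟨⟨chiSqWorstCase g gbar √ρ s, fun i ↦ chiSqWorstCase_nonneg hspos (hcond i),
    sum_chiSqWorstCase hgbar _ _, ?_, (sum_chiSqWorstCase_mul hgbar hs2 hspos.ne').symm⟩, ?_⟩
  · rw [mean_sq_card_mul_chiSqWorstCase_sub_one hs2 hspos.ne', Real.sq_sqrt hρ]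
  · rintro x ⟨p, -, hp, hpρ, rfl⟩
    rw [hs]
    exact sum_mul_le_mean_add_sqrt_mul_sqrt hgbar hp hpρ

theorem isLeast_chiSq_dual [Nonempty ι] (hgbar : gbar = 1 / (card ι : ℝ) * ∑ i, g i) {ρ s : ℝ}
    (hρ : 0 < ρ) (hs : s = √(1 / (card ι : ℝ) * ∑ i, (g i - gbar) ^ 2)) (hspos : 0 < s) :
    IsLeast {x : ℝ | ∃ μ : ℝ, 0 < μ ∧ ∃ ν : ℝ,
        x = 1 / (card ι : ℝ) * ∑ i, μ * (((g i - ν) / μ) ^ 2 / 4 + (g i - ν) / μ) + μ * ρ + ν}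
      (gbar + √ρ * s) := by
  have hs2 : 1 / (card ι : ℝ) * ∑ i, (g i - gbar) ^ 2 = s ^ 2 := by
    rw [hs, Real.sq_sqrt (by positivity)]
  have hr : 0 < √ρ := Real.sqrt_pos.2 hρ
  refine ⟨⟨s / (2 * √ρ), by positivity, gbar, ?_⟩, ?_⟩
  · rw [chiSqDual_objective_eq hgbar (by positivity) gbar ρ, hs2]
    field_simp
    linear_combination 4 * s ^ 2 * Real.sq_sqrt hρ.le
  · rintro x ⟨μ, hμ, ν, rfl⟩
    rw [chiSqDual_objective_eq hgbar hμ.ne' ν ρ, hs2, add_div]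
    have := mul_le_sq_div_add_mul_sq hμ √ρ s
    rw [Real.sq_sqrt hρ.le] at this
    have : 0 ≤ (gbar - ν) ^ 2 / (4 * μ) := by positivity
    linarith

end

/-- **Strong duality for the χ² robust constraint.**
Let `g₁, …, gₙ ∈ ℝ`, `ḡ = (1/n)Σᵢ gᵢ`, `s = √((1/n)Σᵢ (gᵢ − ḡ)²)`, and suppose `ρ > 0`,
`s > 0`, and `√ρ · (ḡ − gᵢ) ≤ s` for every `i`. Then the distributionally robust average
`sup{Σᵢ pᵢ gᵢ : p ∈ Δₙ, (1/n)Σᵢ (n pᵢ − 1)² ≤ ρ}` equals its Lagrangian dual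
`inf{(1/n)Σᵢ μ φ*((gᵢ − ν)/μ) + μρ + ν : μ > 0, ν ∈ ℝ}` with `φ*(u) = u²/4 + u`, the common
value being `ḡ + √ρ · s`. -/
theorem strong_duality_chiSq_robust (n : ℕ) (hn : 0 < n) (g : Fin n → ℝ)
    (ρ : ℝ) (hρ : 0 < ρ) (gbar s : ℝ)
    (hgbar : gbar = (1 / (n : ℝ)) * ∑ i, g i)
    (hs : s = Real.sqrt ((1 / (n : ℝ)) * ∑ i, (g i - gbar) ^ 2))
    (hspos : 0 < s)
    (hcond : ∀ i, Real.sqrt ρ * (gbar - g i) ≤ s) :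
    sSup {x : ℝ | ∃ p : Fin n → ℝ, (∀ i, 0 ≤ p i) ∧ (∑ i, p i) = 1 ∧
        (1 / (n : ℝ)) * ∑ i, ((n : ℝ) * p i - 1) ^ 2 ≤ ρ ∧ x = ∑ i, p i * g i}
      = gbar + Real.sqrt ρ * s ∧
    sInf {x : ℝ | ∃ μ : ℝ, 0 < μ ∧ ∃ ν : ℝ,
        x = (1 / (n : ℝ)) * ∑ i, μ * (((g i - ν) / μ) ^ 2 / 4 + (g i - ν) / μ) + μ * ρ + ν}
      = gbar + Real.sqrt ρ * s := by
  have : Nonempty (Fin n) := ⟨⟨0, hn⟩⟩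
  replace hgbar : gbar = 1 / (card (Fin n) : ℝ) * ∑ i, g i := by rwa [card_fin]
  replace hs : s = √(1 / (card (Fin n) : ℝ) * ∑ i, (g i - gbar) ^ 2) := by rwa [card_fin]
  simpa only [card_fin] using
    And.intro (isGreatest_chiSq_primal hgbar hρ.le hs hspos hcond).csSup_eq
      (isLeast_chiSq_dual hgbar hρ hs hspos).csInf_eq
end
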